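/- Let U_1,…,U_L and V_1,…,V_L be orthogonal d×d real matrices with V_{l+1} = U_l for l ∈ {1,…,L−1}. Let W_1,…,W_L be d×d real matrices, define W'_l := U_lᵀ·W_l·V_l for each l, and define Φ' := U_Lᵀ·Φ·V_1. Then the gradient-descent update commutes with this conjugation: for every l ∈ {1,…,L}, U_lᵀ·[(1 − ηλ)·W_l − η·(W_L⋯W_{l+1})ᵀ·(W_L·W_{L−1}⋯W_1 − Φ)·(W_{l−1}⋯W_1)ᵀ]·V_l = (1 − ηλ)·W'_l − η·(W'_L⋯W'_{l+1})ᵀ·(W'_L·W'_{L−1}⋯W'_1 − Φ')·(W'_{l−1}⋯W'_1)ᵀ, where empty products equal I_d. -/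

import Mathlib

/-! Put `Q 0 = V 1` and `Q k = U k` for `k ≥ 1`; the linking condition `V (k + 1) = U k` says
exactly that `W' k = Q kᵀ * W k * Q (k - 1)`. In a product of consecutive `W'` the inner factors
`Q k * Q kᵀ = 1` telescope, so `W' j ⋯ W' (i + 1) = Q jᵀ * (W j ⋯ W (i + 1)) * Q i`, and
`Φ' = Q Lᵀ * Φ * Q 0` has the same shape as the full product. In the gradient term the outer
factors `Q L` and `Q 0` then cancel, leaving the conjugate `Q lᵀ * (⋯) * Q (l - 1)`. -/

open Matrix BigOperators Filter

noncomputable section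

/-- Auxiliary: product of `k` consecutive matrices ending (on the right) at index `i`. -/
def chainAux {n : Type*} [Fintype n] [DecidableEq n]
    (W : ℕ → Matrix n n ℝ) (i : ℕ) : ℕ → Matrix n n ℝ
  | 0 => 1
  | (k+1) => W (i + k) * chainAux W i k

/-- `chain W i j = W j * W (j-1) * ⋯ * W i`; equals `1` when `j < i` (empty product). -/
def chain {n : Type*} [Fintype n] [DecidableEq n]
    (W : ℕ → Matrix n n ℝ) (i j : ℕ) : Matrix n n ℝ :=
  chainAux W i (j + 1 - i)

/-- `blockDiag r m A B` is the `(2r+m)×(2r+m)` block-diagonal matrix `diag(A, B)`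
with top-left block `A` (of size `2r×2r`) and bottom-right block `B` (of size `m×m`). -/
def blockDiag (r m : ℕ) (A : Matrix (Fin (2*r)) (Fin (2*r)) ℝ)
    (B : Matrix (Fin m) (Fin m) ℝ) : Matrix (Fin (2*r + m)) (Fin (2*r + m)) ℝ :=
  Matrix.reindex finSumFinEquiv finSumFinEquiv (Matrix.fromBlocks A 0 0 B)

/-- The `d×2r` matrix formed by the first `2r` columns of a `(2r+m)×(2r+m)` matrix. -/
def cols1 (r m : ℕ) (U : Matrix (Fin (2*r + m)) (Fin (2*r + m)) ℝ) :
    Matrix (Fin (2*r + m)) (Fin (2*r)) ℝ :=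
  fun i j => U i (Fin.castAdd m j)

/-- The `d×m` matrix formed by the last `m` columns of a `(2r+m)×(2r+m)` matrix. -/
def cols2 (r m : ℕ) (U : Matrix (Fin (2*r + m)) (Fin (2*r + m)) ℝ) :
    Matrix (Fin (2*r + m)) (Fin m) ℝ :=
  fun i j => U i (Fin.natAdd (2*r) j)

/-- Squared Frobenius norm: `‖A‖_F² = trace(AᵀA)`. -/
def frobSq {p q : Type*} [Fintype p] [Fintype q] (A : Matrix p q ℝ) : ℝ :=
  Matrix.trace (Aᵀ * A)

/-- Frobenius norm: `‖A‖_F = √(trace(AᵀA))`. -/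
def frobNorm {p q : Type*} [Fintype p] [Fintype q] (A : Matrix p q ℝ) : ℝ :=
  Real.sqrt (Matrix.trace (Aᵀ * A))

section Chain

variable {n : Type*} [Fintype n] [DecidableEq n]

lemma chain_eq_one_of_lt (W : ℕ → Matrix n n ℝ) {i j : ℕ} (h : j < i) : chain W i j = 1 := by
  rw [chain, Nat.sub_eq_zero_of_le h, chainAux]

lemma chain_succ (W : ℕ → Matrix n n ℝ) {i j : ℕ} (h : i ≤ j + 1) :
    chain W i (j + 1) = W (j + 1) * chain W i j := by
  rw [chain, chain, show j + 1 + 1 - i = (j + 1 - i) + 1 by omega, chainAux,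
    show i + (j + 1 - i) = j + 1 by omega]

lemma chain_conj {Q W W' : ℕ → Matrix n n ℝ} {i j : ℕ} (hij : i ≤ j)
    (hQ : ∀ k, i ≤ k → k ≤ j → (Q k)ᵀ * Q k = 1)
    (hW' : ∀ k, i ≤ k → k < j → W' (k + 1) = (Q (k + 1))ᵀ * W (k + 1) * Q k) :
    chain W' (i + 1) j = (Q j)ᵀ * chain W (i + 1) j * Q i := by
  induction j, hij using Nat.le_induction with
  | base => rw [chain_eq_one_of_lt _ (by omega), chain_eq_one_of_lt _ (by omega), mul_one,
      hQ i le_rfl le_rfl]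
  | succ j hij ih =>
    have hQj : Q j * (Q j)ᵀ = 1 := mul_eq_one_comm.mp (hQ j hij (by omega))
    rw [chain_succ W' (by omega), chain_succ W (by omega), hW' j hij (by omega),
      ih (fun k hk hkj => hQ k hk (by omega)) (fun k hk hkj => hW' k hk (by omega))]
    simp only [Matrix.mul_assoc]
    rw [← Matrix.mul_assoc (Q j), hQj, Matrix.one_mul]

end Chain

lemma update_conj {m p q r s : Type*} [Fintype m] [Fintype p] [Fintype q] [Fintype r]
    [Fintype s] [DecidableEq m] [DecidableEq r]
    {P : Matrix m m ℝ} {R : Matrix r r ℝ} (hP : P * Pᵀ = 1) (hR : R * Rᵀ = 1)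
    (X : Matrix p q ℝ) (Y : Matrix s r ℝ) (c η : ℝ) (M : Matrix p s ℝ)
    (A : Matrix m p ℝ) (B : Matrix m r ℝ) (C : Matrix s r ℝ) :
    Xᵀ * (c • M - η • (Aᵀ * B * Cᵀ)) * Y
      = c • (Xᵀ * M * Y) - η • ((Pᵀ * A * X)ᵀ * (Pᵀ * B * R) * (Yᵀ * C * R)ᵀ) := by
  simp only [Matrix.transpose_mul, Matrix.transpose_transpose, Matrix.mul_assoc]
  rw [← Matrix.mul_assoc P, hP, Matrix.one_mul, ← Matrix.mul_assoc R, hR, Matrix.one_mul]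
  simp only [Matrix.mul_sub, Matrix.sub_mul, Matrix.mul_smul, Matrix.smul_mul, Matrix.mul_assoc]

theorem statement16_general
    (d : ℕ) (L : ℕ) (hL : 1 ≤ L)
    (Φ : Matrix (Fin d) (Fin d) ℝ)
    (η lam : ℝ)
    (U V : ℕ → Matrix (Fin d) (Fin d) ℝ)
    (hU : ∀ l, 1 ≤ l → l ≤ L → (U l)ᵀ * U l = 1 ∧ U l * (U l)ᵀ = 1)
    (hV : ∀ l, 1 ≤ l → l ≤ L → (V l)ᵀ * V l = 1 ∧ V l * (V l)ᵀ = 1)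
    (hUV : ∀ l, 1 ≤ l → l + 1 ≤ L → V (l+1) = U l)
    (W : ℕ → Matrix (Fin d) (Fin d) ℝ)
    (W' : ℕ → Matrix (Fin d) (Fin d) ℝ)
    (hW' : ∀ l, W' l = (U l)ᵀ * W l * V l)
    (Φ' : Matrix (Fin d) (Fin d) ℝ)
    (hΦ' : Φ' = (U L)ᵀ * Φ * V 1) :
    ∀ l, 1 ≤ l → l ≤ L →
      (U l)ᵀ * ((1 - η * lam) • W l
          - η • ((chain W (l+1) L)ᵀ * (chain W 1 L - Φ) * (chain W 1 (l-1))ᵀ)) * V l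
        = (1 - η * lam) • W' l
          - η • ((chain W' (l+1) L)ᵀ * (chain W' 1 L - Φ') * (chain W' 1 (l-1))ᵀ) := by
  intro l hl hlL
  obtain ⟨l, rfl⟩ := Nat.exists_eq_add_of_le' hl
  rw [Nat.add_sub_cancel]
  set Q : ℕ → Matrix (Fin d) (Fin d) ℝ := fun k => if k = 0 then V 1 else U k
  have hQ0 : Q 0 = V 1 := if_pos rfl
  have hQU : ∀ k, k ≠ 0 → Q k = U k := fun k hk => if_neg hk
  have hQ : ∀ k, k ≤ L → (Q k)ᵀ * Q k = 1 := by
    rintro (_ | k) hk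
    exacts [(hV 1 le_rfl hL).1, (hU (k + 1) (by omega) hk).1]
  have hVQ : ∀ k, k + 1 ≤ L → V (k + 1) = Q k := by
    rintro (_ | k) hk
    exacts [rfl, hUV (k + 1) (by omega) hk]
  have hW'Q : ∀ k, k + 1 ≤ L → W' (k + 1) = (Q (k + 1))ᵀ * W (k + 1) * Q k := fun k hk => by
    rw [hW', hVQ k hk, hQU _ k.succ_ne_zero]
  have hchain : ∀ i j, i ≤ j → j ≤ L → chain W' (i + 1) j = (Q j)ᵀ * chain W (i + 1) j * Q i :=
    fun i j hij hjL => chain_conj hij (fun k _ hk => hQ k (by omega))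
      (fun k _ hk => hW'Q k (by omega))
  have hQL : Q L = U L := hQU L (by omega)
  have hmid : chain W' 1 L - Φ' = (Q L)ᵀ * (chain W 1 L - Φ) * Q 0 := by
    rw [hchain 0 L (Nat.zero_le L) le_rfl, hΦ', ← hQL, ← hQ0, zero_add, Matrix.mul_sub,
      Matrix.sub_mul]
  rw [hW'Q l hlL, hchain (l + 1) L hlL le_rfl, hmid, hchain 0 l (Nat.zero_le l) (by omega),
    hVQ l hlL, ← hQU _ l.succ_ne_zero]
  exact update_conj (mul_eq_one_comm.mp (hQ L le_rfl))
    (mul_eq_one_comm.mp (hQ 0 (Nat.zero_le L))) _ _ _ _ _ _ _ _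

/-- the gradient-descent update commutes with conjugation by a
chain of orthogonal matrices `U_l, V_l` with `V_{l+1} = U_l`, where the target is
conjugated as `Φ' = U_Lᵀ·Φ·V_1`. -/
theorem statement16
    (d : ℕ) (hd : 1 ≤ d) (L : ℕ) (hL : 1 ≤ L)
    (Φ : Matrix (Fin d) (Fin d) ℝ)
    (η lam : ℝ) (hη : 0 < η) (hlam : 0 ≤ lam)
    (U V : ℕ → Matrix (Fin d) (Fin d) ℝ)
    (hU : ∀ l, 1 ≤ l → l ≤ L → (U l)ᵀ * U l = 1 ∧ U l * (U l)ᵀ = 1)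
    (hV : ∀ l, 1 ≤ l → l ≤ L → (V l)ᵀ * V l = 1 ∧ V l * (V l)ᵀ = 1)
    (hUV : ∀ l, 1 ≤ l → l + 1 ≤ L → V (l+1) = U l)
    (W : ℕ → Matrix (Fin d) (Fin d) ℝ)
    (W' : ℕ → Matrix (Fin d) (Fin d) ℝ)
    (hW' : ∀ l, W' l = (U l)ᵀ * W l * V l)
    (Φ' : Matrix (Fin d) (Fin d) ℝ)
    (hΦ' : Φ' = (U L)ᵀ * Φ * V 1) :
    ∀ l, 1 ≤ l → l ≤ L →
      (U l)ᵀ * ((1 - η * lam) • W l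
          - η • ((chain W (l+1) L)ᵀ * (chain W 1 L - Φ) * (chain W 1 (l-1))ᵀ)) * V l
        = (1 - η * lam) • W' l
          - η • ((chain W' (l+1) L)ᵀ * (chain W' 1 L - Φ') * (chain W' 1 (l-1))ᵀ) :=
  statement16_general d L hL Φ η lam U V hU hV hUV W W' hW' Φ' hΦ'
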